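/- The 'cut' comultiplication on the free Z-module with basis all compositions, defined by μ([a_1,...,a_m]) = Σ_{i=0}^{m} [a_1,...,a_i] ⊗ [a_{i+1},...,a_m], is coassociative and is an algebra homomorphism with respect to the overlapping shuffle product (i.e., μ(α * β) = μ(α) * μ(β) in the tensor-product algebra). -/

import Mathlib

/-- The overlapping shuffle product of two compositions, defined by the recursion
`[] * β = β`, `α * [] = α`,
`(a::α') * (b::β') = a::(α' * (b::β')) + b::((a::α') * β') + (a+b)::(α' * β')`. -/
noncomputable def osh : List ℕ+ → List ℕ+ → (List ℕ+ →₀ ℤ)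
  | [], β => Finsupp.single β 1
  | a :: α', [] => Finsupp.single (a :: α') 1
  | a :: α', b :: β' =>
      Finsupp.mapDomain (a :: ·) (osh α' (b :: β'))
        + Finsupp.mapDomain (b :: ·) (osh (a :: α') β')
        + Finsupp.mapDomain ((a + b) :: ·) (osh α' β')
  termination_by α β => α.length + β.length
  decreasing_by all_goals (simp [List.length_cons]; try omega)

/-- The `ℤ`-bilinear extension of the overlapping shuffle product. -/
noncomputable def oshMul (x y : List ℕ+ →₀ ℤ) : List ℕ+ →₀ ℤ :=
  x.sum fun α c => y.sum fun β d => (c * d) • osh α β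

open TensorProduct

/-- The 'cut' comultiplication on a basis composition:
`μ([a₁,…,a_m]) = ∑_{i=0}^{m} [a₁,…,a_i] ⊗ [a_{i+1},…,a_m]`. -/
noncomputable def cutB (α : List ℕ+) :
    (List ℕ+ →₀ ℤ) ⊗[ℤ] (List ℕ+ →₀ ℤ) :=
  ∑ i ∈ Finset.range (α.length + 1),
    Finsupp.single (α.take i) (1 : ℤ) ⊗ₜ[ℤ] Finsupp.single (α.drop i) (1 : ℤ)

/-- The `ℤ`-linear extension of the cut comultiplication. -/
noncomputable def cut : (List ℕ+ →₀ ℤ) →ₗ[ℤ] (List ℕ+ →₀ ℤ) ⊗[ℤ] (List ℕ+ →₀ ℤ) :=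
  Finsupp.lsum ℤ fun α => LinearMap.toSpanSingleton ℤ _ (cutB α)

/-!
Coassociativity: both iterated coproducts of a composition `α` are the sum, over all ways of
cutting `α` into three consecutive pieces, of the tensor product of the pieces. After
reindexing the two double sums by the two cut points, this is `Finset.sum_range_diag_flip`.

Multiplicativity: `μ(α) * μ(β)` obeys the same recursion in the first letters as the
overlapping shuffle. A cut of a term of `(a :: α) * (b :: β)` either lies before the first
letter, or keeps its first letter `a`, `b` or `a + b` in the left factor, and `μ` commutes with
prepending a letter up to the cut in front. Hence `μ ∘ osh` and `μ(·) * μ(·)` agree by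
induction on the total length.
-/

open Finsupp (single)

theorem cut_single (α : List ℕ+) (c : ℤ) : cut (single α c) = c • cutB α := by
  simp [cut, LinearMap.toSpanSingleton_apply]

-- `cut` lands in the tensor square with the ℤ-module structure `AddCommGroup.toIntModule`,
-- while `TensorProduct.assoc` expects `TensorProduct.instModule`; the two agree only up to
-- unfolding, so lemmas about `assoc` are applied with `exact`/`rfl` rather than `rw`/`simp`.
theorem coassoc_cutB (α : List ℕ+) :
    TensorProduct.assoc ℤ _ _ _ (TensorProduct.map cut LinearMap.id (cutB α))
      = TensorProduct.map LinearMap.id cut (cutB α) := by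
  let f (j k : ℕ) : (List ℕ+ →₀ ℤ) ⊗[ℤ] ((List ℕ+ →₀ ℤ) ⊗[ℤ] (List ℕ+ →₀ ℤ)) :=
    single (α.take j) 1 ⊗ₜ (single ((α.drop j).take k) 1 ⊗ₜ single ((α.drop j).drop k) 1)
  have lhs : TensorProduct.assoc ℤ _ _ _ (TensorProduct.map cut LinearMap.id (cutB α))
      = ∑ i ∈ Finset.range (α.length + 1), ∑ j ∈ Finset.range (i + 1), f j (i - j) := by
    simp only [cutB, map_sum, TensorProduct.map_tmul, cut_single, one_smul, LinearMap.id_coe,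
      id_eq, TensorProduct.sum_tmul]
    refine (map_sum _ _ _).trans (Finset.sum_congr rfl fun i hi => ?_)
    rw [Finset.mem_range] at hi
    rw [List.length_take, min_eq_left (by omega)]
    refine (map_sum _ _ _).trans (Finset.sum_congr rfl fun j hj => ?_)
    rw [Finset.mem_range] at hj
    refine (TensorProduct.assoc_tmul _ _ _).trans ?_
    rw [List.take_take, min_eq_left (by omega), List.drop_take]
    simp only [f, List.drop_drop, Nat.add_sub_cancel' (by omega : j ≤ i)]
    rfl
  have rhs : TensorProduct.map LinearMap.id cut (cutB α)
      = ∑ j ∈ Finset.range (α.length + 1), ∑ k ∈ Finset.range (α.length + 1 - j), f j k := by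
    simp only [cutB, map_sum, TensorProduct.map_tmul, cut_single, one_smul, LinearMap.id_coe,
      id_eq, TensorProduct.tmul_sum, List.length_drop, f]
    refine Finset.sum_congr rfl fun j hj => ?_
    rw [Nat.sub_add_comm (by simpa [Nat.lt_succ_iff] using hj)]
  rw [lhs, rhs, Finset.sum_range_diag_flip]

theorem cut_coassoc (x : List ℕ+ →₀ ℤ) :
    TensorProduct.assoc ℤ _ _ _ (TensorProduct.map cut LinearMap.id (cut x))
      = TensorProduct.map LinearMap.id cut (cut x) := by
  induction x using Finsupp.induction_linear with
  | zero => simp only [map_zero]; exact map_zero _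
  | add x y hx hy => simp only [map_add]; exact (map_add _ _ _).trans (congrArg₂ _ hx hy)
  | single α c =>
    rw [cut_single]
    exact (congrArg _ (map_smul _ _ _)).trans
      ((map_smul _ _ _).trans ((congrArg _ (coassoc_cutB α)).trans (map_smul _ _ _).symm))

theorem osh_nil_left (β : List ℕ+) : osh [] β = single β 1 := by
  rw [osh]

theorem osh_nil_right (α : List ℕ+) : osh α [] = single α 1 := by
  cases α <;> rw [osh]

theorem osh_cons_cons (a b : ℕ+) (α β : List ℕ+) :
    osh (a :: α) (b :: β) = Finsupp.mapDomain (a :: ·) (osh α (b :: β))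
      + Finsupp.mapDomain (b :: ·) (osh (a :: α) β)
      + Finsupp.mapDomain ((a + b) :: ·) (osh α β) := by
  rw [osh]

/-- `μ(α) * μ(β)`, computed in the tensor square. -/
noncomputable def cutMulCut (α β : List ℕ+) : (List ℕ+ →₀ ℤ) ⊗[ℤ] (List ℕ+ →₀ ℤ) :=
  ∑ i ∈ Finset.range (α.length + 1), ∑ j ∈ Finset.range (β.length + 1),
    osh (α.take i) (β.take j) ⊗ₜ[ℤ] osh (α.drop i) (β.drop j)

theorem cutMulCut_nil_left (β : List ℕ+) : cutMulCut [] β = cutB β := by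
  simp [cutMulCut, cutB, osh_nil_left]

theorem cutMulCut_nil_right (α : List ℕ+) : cutMulCut α [] = cutB α := by
  simp [cutMulCut, cutB, osh_nil_right]

theorem cutMulCut_cons_cons (a b : ℕ+) (α β : List ℕ+) :
    cutMulCut (a :: α) (b :: β) = single [] 1 ⊗ₜ[ℤ] osh (a :: α) (b :: β)
      + TensorProduct.map (Finsupp.lmapDomain ℤ ℤ (a :: ·)) LinearMap.id (cutMulCut α (b :: β))
      + TensorProduct.map (Finsupp.lmapDomain ℤ ℤ (b :: ·)) LinearMap.id (cutMulCut (a :: α) β)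
      + TensorProduct.map (Finsupp.lmapDomain ℤ ℤ ((a + b) :: ·)) LinearMap.id
          (cutMulCut α β) := by
  simp only [cutMulCut, List.length_cons, map_sum, TensorProduct.map_tmul,
    Finsupp.lmapDomain_apply, LinearMap.id_coe, id_eq]
  rw [Finset.sum_range_succ' _ (α.length + 1), Finset.sum_range_succ' _ (α.length + 1)]
  simp only [Finset.sum_range_succ' _ (β.length + 1), List.take_succ_cons, List.drop_succ_cons,
    List.take_zero, List.drop_zero, osh_nil_left, osh_nil_right, osh_cons_cons,
    Finsupp.mapDomain_single, TensorProduct.add_tmul, Finset.sum_add_distrib]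
  abel

theorem cutB_cons (a : ℕ+) (α : List ℕ+) :
    cutB (a :: α) = single [] 1 ⊗ₜ[ℤ] single (a :: α) 1
      + TensorProduct.map (Finsupp.lmapDomain ℤ ℤ (a :: ·)) LinearMap.id (cutB α) := by
  simp only [cutB, List.length_cons, Finset.sum_range_succ' _ (α.length + 1), map_sum,
    TensorProduct.map_tmul, Finsupp.lmapDomain_apply, Finsupp.mapDomain_single, LinearMap.id_coe,
    id_eq, List.take_succ_cons, List.drop_succ_cons, List.take_zero, List.drop_zero]
  rw [add_comm]

theorem cut_mapDomain_cons (a : ℕ+) (x : List ℕ+ →₀ ℤ) :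
    cut (Finsupp.mapDomain (a :: ·) x) = single [] 1 ⊗ₜ[ℤ] Finsupp.mapDomain (a :: ·) x
      + TensorProduct.map (Finsupp.lmapDomain ℤ ℤ (a :: ·)) LinearMap.id (cut x) := by
  induction x using Finsupp.induction_linear with
  | zero => simp
  | add x y hx hy =>
    simp only [Finsupp.mapDomain_add, map_add, hx, hy, TensorProduct.tmul_add]
    abel
  | single α c =>
    rw [Finsupp.mapDomain_single, cut_single, cut_single, cutB_cons, smul_add, map_smul,
      TensorProduct.smul_tmul', TensorProduct.smul_tmul, Finsupp.smul_single_one]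

theorem cut_osh : ∀ α β : List ℕ+, cut (osh α β) = cutMulCut α β
  | [], β => by rw [osh_nil_left, cut_single, one_smul, cutMulCut_nil_left]
  | a :: α, [] => by rw [osh_nil_right, cut_single, one_smul, cutMulCut_nil_right]
  | a :: α, b :: β => by
    rw [cutMulCut_cons_cons, ← cut_osh α (b :: β), ← cut_osh (a :: α) β, ← cut_osh α β,
      osh_cons_cons, map_add, map_add, cut_mapDomain_cons, cut_mapDomain_cons, cut_mapDomain_cons,
      TensorProduct.tmul_add, TensorProduct.tmul_add]
    abel

/-- The cut comultiplication is coassociative, and it is an algebra homomorphism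
with respect to the overlapping shuffle product: on basis elements,
`μ(α * β) = μ(α) * μ(β)` in the tensor-product algebra, i.e.
`μ(α * β) = ∑_{i,j} (α_{≤i} * β_{≤j}) ⊗ (α_{>i} * β_{>j})`. -/
theorem cut_coassoc_and_mul :
    (∀ x : List ℕ+ →₀ ℤ,
      (TensorProduct.assoc ℤ _ _ _)
          ((TensorProduct.map cut LinearMap.id) (cut x))
        = (TensorProduct.map LinearMap.id cut) (cut x)) ∧
    (∀ α β : List ℕ+,
      cut (osh α β)
        = ∑ i ∈ Finset.range (α.length + 1), ∑ j ∈ Finset.range (β.length + 1),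
            osh (α.take i) (β.take j) ⊗ₜ[ℤ] osh (α.drop i) (β.drop j)) :=
  ⟨cut_coassoc, cut_osh⟩
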